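/- arXiv:1710.11399 — 3 statements merged into one kernel-verified Lean document; each statement's English description precedes it below -/
import Mathlib

section
/- (Remark 5.1, Coulomb gauge) Let s be a real number with 3/4 ≤ s ≤ 1. Define the sequence (t_k)_{k≥1} by t_1 = 3/4 − s/3 − s²/3 and t_{k+1} = (1−s)(5/6 − t_k + (1−s)/3) + t_k/2, and set t_∞ = (7/3 − 2s/3)(1−s)/(3−2s). Then for every k ≥ 1: (1−s)/3 ≤ t_∞ < t_k ≤ t_1 ≤ 1/2, and moreover t_k > 1 − s. -/
/-!
The recursion is the affine map `x ↦ (s - 1/2) x + const` with fixed point `t_∞`, so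
`t_k - t_∞ = (s - 1/2)^(k-1) (t_1 - t_∞)`, and `t_1 - t_∞ = (2s - 1)^3 / (12 (3 - 2s))`.
For `1/2 < s ≤ 1` the factor `s - 1/2` lies in `(0, 1/2]` and `t_1 > t_∞`, so the `t_k` decrease
to `t_∞` from above. The bounds on `t_∞` and `t_1` are polynomial inequalities in `s`.
-/

section AffineIteration

variable {α : Type*} [CommRing α] {u : ℕ → α} {a c : α}

theorem sub_eq_pow_mul_of_affine (h : ∀ k, 1 ≤ k → u (k + 1) - c = a * (u k - c))
    {k : ℕ} (hk : 1 ≤ k) : u k - c = a ^ (k - 1) * (u 1 - c) := by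
  induction k, hk using Nat.le_induction with
  | base => simp
  | succ n hn ih =>
    obtain ⟨m, rfl⟩ := Nat.exists_eq_add_of_le' hn
    rw [h _ hn, ih]
    simp only [Nat.add_sub_cancel]
    ring

theorem mem_Ioc_of_affine_contraction [LinearOrder α] [IsStrictOrderedRing α]
    (h : ∀ k, 1 ≤ k → u (k + 1) - c = a * (u k - c)) (ha₀ : 0 < a) (ha₁ : a ≤ 1)
    (hc : c < u 1) {k : ℕ} (hk : 1 ≤ k) : u k ∈ Set.Ioc c (u 1) := by
  have hk' := sub_eq_pow_mul_of_affine h hk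
  have hpos : 0 < a ^ (k - 1) * (u 1 - c) := mul_pos (pow_pos ha₀ _) (sub_pos.2 hc)
  have hle : a ^ (k - 1) * (u 1 - c) ≤ u 1 - c :=
    mul_le_of_le_one_left (sub_pos.2 hc).le (pow_le_one₀ ha₀.le ha₁)
  constructor <;> linarith

end AffineIteration

section Pecher

noncomputable def pecherStep (s x : ℝ) : ℝ := (1 - s) * (5/6 - x + (1 - s)/3) + x / 2

noncomputable def pecherLimit (s : ℝ) : ℝ := (7/3 - 2*s/3) * (1 - s) / (3 - 2*s)

variable {s : ℝ}

theorem pecherStep_sub_pecherLimit (hs : s < 3/2) (x : ℝ) :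
    pecherStep s x - pecherLimit s = (s - 1/2) * (x - pecherLimit s) := by
  have : (3 : ℝ) - s*2 ≠ 0 := by linarith
  unfold pecherStep pecherLimit
  field_simp
  ring

theorem sub_pecherLimit_eq (hs : s < 3/2) :
    3/4 - s/3 - s^2/3 - pecherLimit s = (2*s - 1)^3 / (12 * (3 - 2*s)) := by
  have : (3 : ℝ) - s*2 ≠ 0 := by linarith
  unfold pecherLimit
  field_simp
  ring

theorem pecherLimit_lt (hs₁ : 1/2 < s) (hs₂ : s < 3/2) :
    pecherLimit s < 3/4 - s/3 - s^2/3 := by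
  have : 0 < (2*s - 1)^3 / (12 * (3 - 2*s)) := by
    apply div_pos <;> [exact pow_pos (by linarith) 3; linarith]
  linarith [sub_pecherLimit_eq hs₂]

theorem div_three_le_pecherLimit (hs : s ≤ 1) : (1 - s)/3 ≤ pecherLimit s := by
  rw [pecherLimit, le_div_iff₀ (by linarith)]
  nlinarith

theorem one_sub_le_pecherLimit (hs₁ : 1/2 ≤ s) (hs₂ : s ≤ 1) : 1 - s ≤ pecherLimit s := by
  rw [pecherLimit, le_div_iff₀ (by linarith)]
  nlinarith [mul_nonneg (sub_nonneg.2 hs₂) (sub_nonneg.2 hs₁)]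

end Pecher

/-- Remark 5.1 (Coulomb gauge): for every `k ≥ 1`,
`(1−s)/3 ≤ t_∞ < t_k ≤ t_1 ≤ 1/2`, and moreover `t_k > 1 − s`. -/
theorem stmt5 (s : ℝ) (hs1 : 3/4 ≤ s) (hs2 : s ≤ 1)
    (t : ℕ → ℝ) (h1 : t 1 = 3/4 - s/3 - s^2/3)
    (hrec : ∀ k, 1 ≤ k → t (k+1) = (1 - s) * (5/6 - t k + (1 - s)/3) + t k / 2) :
    ∀ k, 1 ≤ k →
      (1 - s)/3 ≤ (7/3 - 2*s/3) * (1 - s) / (3 - 2*s) ∧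
      (7/3 - 2*s/3) * (1 - s) / (3 - 2*s) < t k ∧
      t k ≤ t 1 ∧ t 1 ≤ 1/2 ∧ t k > 1 - s := by
  intro k hk
  have hs : 1/2 < s := by linarith
  have hstep : ∀ k, 1 ≤ k → t (k + 1) - pecherLimit s = (s - 1/2) * (t k - pecherLimit s) :=
    fun k hk ↦ (hrec k hk).symm ▸ pecherStep_sub_pecherLimit (by linarith) (t k)
  obtain ⟨hlim, hdecr⟩ := mem_Ioc_of_affine_contraction hstep (by linarith) (by linarith)
    (h1 ▸ pecherLimit_lt hs (by linarith)) hk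
  refine ⟨div_three_le_pecherLimit hs2, hlim, hdecr, ?_,
    (one_sub_le_pecherLimit hs.le hs2).trans_lt hlim⟩
  rw [h1]
  nlinarith
end

section
/- (Lemma A.3, Lorenz gauge) Let s be a real number with 9/10 < s ≤ 1. Define the sequences (ρ_k)_{k≥1} and (σ_k)_{k≥1} by σ_1 = (3/2 − s/3 − s²)/(1+s), ρ_1 = (7/2 + s − 4s²)/6, ρ_{k+1} = (7/3 − 3s + 2s²/3 + (2s−1)σ_k)/2 and σ_{k+1} = (19/6 − 25s/6 + s² + (3s−2)ρ_{k+1})/(1+s) for k ≥ 1, and set ρ_∞ = ((7/3 − 3s + 2s²/3)(1+s) + (2s−1)(19/6 − 25s/6 + s²))/(2(1+s) − (3s−2)(2s−1)). Then ρ_k > ρ_∞ for every k ≥ 1. -/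
/-!
Both half-steps of the iteration, `σ ↦ ρ` and `ρ ↦ σ`, are affine with positive slopes `(2s - 1)/2`
and `(3s - 2)/(1 + s)`, hence strictly increasing, and `(ρ_∞, σ_∞)` is their common fixed point.
Lying strictly above the fixed point is therefore preserved by every step, so everything reduces to
the two starting inequalities `ρ_∞ < ρ_1` and `σ_∞ < σ_1`, which are polynomial inequalities in `s`
on `(9/10, 1]`.
-/

theorem fixedPoint_lt_of_alternating_iteration {α β : Type*} [Preorder α] [Preorder β]
    {f : β → α} {g : α → β} (hf : StrictMono f) (hg : StrictMono g) {R : α} {S : β}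
    (hfS : f S = R) (hgR : g R = S) {ρ : ℕ → α} {σ : ℕ → β}
    (hρ : ∀ k, 1 ≤ k → ρ (k + 1) = f (σ k)) (hσ : ∀ k, 1 ≤ k → σ (k + 1) = g (ρ (k + 1)))
    (hρ1 : R < ρ 1) (hσ1 : S < σ 1) : ∀ k, 1 ≤ k → R < ρ k := by
  have hρ_succ : ∀ k, 1 ≤ k → S < σ k → R < ρ (k + 1) := fun k hk h ↦
    hρ k hk ▸ hfS ▸ hf h
  have hσ_gt : ∀ k, 1 ≤ k → S < σ k := by
    intro k hk
    induction k, hk using Nat.le_induction with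
    | base => exact hσ1
    | succ k hk ih => exact hσ k hk ▸ hgR ▸ hg (hρ_succ k hk ih)
  intro k hk
  induction k, hk using Nat.le_induction with
  | base => exact hρ1
  | succ k hk _ => exact hρ_succ k hk (hσ_gt k hk)

theorem strictMono_affine_div {a c d : ℝ} (hc : 0 < c) (hd : 0 < d) :
    StrictMono fun x : ℝ ↦ (a + c * x) / d := fun x y h ↦ by
  dsimp only
  gcongr

noncomputable def rhoInfty (s : ℝ) : ℝ :=
  ((7/3 - 3*s + 2*s^2/3) * (1 + s) + (2*s - 1) * (19/6 - 25*s/6 + s^2))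
    / (2 * (1 + s) - (3*s - 2) * (2*s - 1))

noncomputable def sigmaInfty (s : ℝ) : ℝ :=
  (19/6 - 25*s/6 + s^2 + (3*s - 2) * rhoInfty s) / (1 + s)

lemma rhoInfty_denom_eq (s : ℝ) : 2 * (1 + s) - (3*s - 2) * (2*s - 1) = 3 * s * (3 - 2 * s) := by
  ring

lemma rhoInfty_denom_pos {s : ℝ} (hs0 : 0 < s) (hs3 : s < 3/2) :
    0 < 2 * (1 + s) - (3*s - 2) * (2*s - 1) := by
  rw [rhoInfty_denom_eq]
  have : 0 < 3 - 2 * s := by linarith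
  positivity

lemma rhoInfty_eq_of_sigmaInfty {s : ℝ} (hs0 : 0 < s) (hs3 : s < 3/2) :
    (7/3 - 3*s + 2*s^2/3 + (2*s - 1) * sigmaInfty s) / 2 = rhoInfty s := by
  have hρ : rhoInfty s * (2 * (1 + s) - (3*s - 2) * (2*s - 1)) =
      (7/3 - 3*s + 2*s^2/3) * (1 + s) + (2*s - 1) * (19/6 - 25*s/6 + s^2) :=
    div_mul_cancel₀ _ (rhoInfty_denom_pos hs0 hs3).ne'
  have h1s : 1 + s ≠ 0 := by linarith
  unfold sigmaInfty
  field_simp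
  linear_combination -18 * hρ

lemma rhoInfty_lt {s : ℝ} (hs1 : 9/10 < s) (hs2 : s ≤ 1) :
    rhoInfty s < (7/2 + s - 4*s^2) / 6 := by
  unfold rhoInfty
  rw [div_lt_div_iff₀ (rhoInfty_denom_pos (by linarith) (by linarith)) (by norm_num)]
  nlinarith [mul_nonneg (sub_pos.2 hs1).le (sub_nonneg.2 hs2)]

lemma sigmaInfty_lt {s : ℝ} (hs1 : 9/10 < s) (hs2 : s ≤ 1) :
    sigmaInfty s < (3/2 - s/3 - s^2) / (1 + s) := by
  have hD := rhoInfty_denom_pos (by linarith : 0 < s) (by linarith)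
  unfold sigmaInfty rhoInfty
  rw [div_lt_div_iff_of_pos_right (by linarith), ← lt_sub_iff_add_lt', mul_div_assoc',
    div_lt_iff₀ hD]
  nlinarith [mul_nonneg (sub_pos.2 hs1).le (sub_nonneg.2 hs2)]

/-- Lemma A.3 (Lorenz gauge): the iteration `ρ_k` stays strictly above `ρ_∞`. -/
theorem stmt11 (s : ℝ) (hs1 : 9/10 < s) (hs2 : s ≤ 1)
    (ρ σ : ℕ → ℝ)
    (hσ1 : σ 1 = (3/2 - s/3 - s^2) / (1 + s))
    (hρ1 : ρ 1 = (7/2 + s - 4*s^2) / 6)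
    (hρ : ∀ k, 1 ≤ k → ρ (k+1) = (7/3 - 3*s + 2*s^2/3 + (2*s - 1) * σ k) / 2)
    (hσ : ∀ k, 1 ≤ k → σ (k+1) = (19/6 - 25*s/6 + s^2 + (3*s - 2) * ρ (k+1)) / (1 + s)) :
    ∀ k, 1 ≤ k →
      ρ k > ((7/3 - 3*s + 2*s^2/3) * (1 + s) + (2*s - 1) * (19/6 - 25*s/6 + s^2))
              / (2 * (1 + s) - (3*s - 2) * (2*s - 1)) :=
  fixedPoint_lt_of_alternating_iteration
    (strictMono_affine_div (by linarith) two_pos)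
    (strictMono_affine_div (by linarith) (by linarith))
    (rhoInfty_eq_of_sigmaInfty (by linarith) (by linarith)) rfl hρ hσ
    (hρ1 ▸ rhoInfty_lt hs1 hs2) (hσ1 ▸ sigmaInfty_lt hs1 hs2)
end

section
/- (Lemma A.4, Lorenz gauge) Let s be a real number with 9/10 < s ≤ 1. Define the sequences (ρ_k)_{k≥1} and (σ_k)_{k≥1} by σ_1 = (3/2 − s/3 − s²)/(1+s), ρ_1 = (7/2 + s − 4s²)/6, ρ_{k+1} = (7/3 − 3s + 2s²/3 + (2s−1)σ_k)/2 and σ_{k+1} = (19/6 − 25s/6 + s² + (3s−2)ρ_{k+1})/(1+s) for k ≥ 1. Then ρ_{k+1} ≤ ρ_k for every k ≥ 1. -/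
/-!
Both recursions are affine with nonnegative slopes `(2s - 1)/2` and `(3s - 2)/(1 + s)`, so
consecutive differences propagate with a nonnegative factor: `σ_{k+2} - σ_{k+1}` is a nonnegative
multiple of `σ_{k+1} - σ_k`, and `ρ_{k+2} - ρ_{k+1}` one of `σ_{k+1} - σ_k`. It therefore suffices
that the first step decreases both sequences, which is the explicit computation
`ρ_1 - ρ_2 = (2s - 1)(3s - 2) / (12(1 + s))` and
`σ_1 - σ_2 = (2s - 1)(3s - 2)(4s² + 4s - 5) / (12(1 + s)²)`; the last factor is positive for
`s > (√6 - 1)/2 ≈ 0.72`.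
-/

section CoupledRecursion

variable {a b c d : ℝ} {ρ σ : ℕ → ℝ}

theorem snd_succ_le_of_coupled_recursion (hb : 0 ≤ b) (hd : 0 ≤ d)
    (hρ : ∀ k, 1 ≤ k → ρ (k + 1) = a + b * σ k)
    (hσ : ∀ k, 1 ≤ k → σ (k + 1) = c + d * ρ (k + 1))
    (h₁ : σ 2 ≤ σ 1) : ∀ k, 1 ≤ k → σ (k + 1) ≤ σ k := by
  intro k hk
  induction k, hk using Nat.le_induction with
  | base => exact h₁
  | succ n hn ih =>
    have hdiff : σ (n + 2) - σ (n + 1) = b * d * (σ (n + 1) - σ n) := by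
      linear_combination
        hσ (n + 1) (by omega) - hσ n hn + d * hρ (n + 1) (by omega) - d * hρ n hn
    have := mul_nonpos_of_nonneg_of_nonpos (mul_nonneg hb hd) (sub_nonpos.2 ih)
    linarith

theorem fst_succ_le_of_coupled_recursion (hb : 0 ≤ b) (hd : 0 ≤ d)
    (hρ : ∀ k, 1 ≤ k → ρ (k + 1) = a + b * σ k)
    (hσ : ∀ k, 1 ≤ k → σ (k + 1) = c + d * ρ (k + 1))
    (hρ₁ : ρ 2 ≤ ρ 1) (hσ₁ : σ 2 ≤ σ 1) : ∀ k, 1 ≤ k → ρ (k + 1) ≤ ρ k := by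
  rintro (_ | _ | n) hk
  · omega
  · exact hρ₁
  · rw [hρ (n + 2) (by omega), hρ (n + 1) (by omega)]
    gcongr
    exact snd_succ_le_of_coupled_recursion hb hd hρ hσ hσ₁ (n + 1) (by omega)

end CoupledRecursion

theorem stmt12_general (s : ℝ) (hs1 : 9/10 < s)
    (ρ σ : ℕ → ℝ)
    (hσ1 : σ 1 = (3/2 - s/3 - s^2) / (1 + s))
    (hρ1 : ρ 1 = (7/2 + s - 4*s^2) / 6)
    (hρ : ∀ k, 1 ≤ k → ρ (k+1) = (7/3 - 3*s + 2*s^2/3 + (2*s - 1) * σ k) / 2)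
    (hσ : ∀ k, 1 ≤ k → σ (k+1) = (19/6 - 25*s/6 + s^2 + (3*s - 2) * ρ (k+1)) / (1 + s)) :
    ∀ k, 1 ≤ k → ρ (k+1) ≤ ρ k := by
  have hs : 0 < 1 + s := by linarith
  have hρ₂ : ρ 1 - ρ 2 = (2*s - 1) * (3*s - 2) / (12 * (1 + s)) := by
    rw [hρ 1 le_rfl, hσ1, hρ1]
    field_simp
    ring
  have hσ₂ : σ 1 - σ 2 = (2*s - 1) * (3*s - 2) * (4*s^2 + 4*s - 5) / (12 * (1 + s)^2) := by
    rw [hσ 1 le_rfl, hρ 1 le_rfl, hσ1]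
    field_simp
    ring
  have hρ₂_nonneg : 0 ≤ (2*s - 1) * (3*s - 2) / (12 * (1 + s)) := by
    apply div_nonneg <;> nlinarith
  have hσ₂_nonneg : 0 ≤ (2*s - 1) * (3*s - 2) * (4*s^2 + 4*s - 5) / (12 * (1 + s)^2) := by
    apply div_nonneg
    · apply mul_nonneg <;> nlinarith
    · positivity
  exact fst_succ_le_of_coupled_recursion (ρ := ρ) (σ := σ) (a := (7/3 - 3*s + 2*s^2/3) / 2)
    (b := (2*s - 1) / 2) (c := (19/6 - 25*s/6 + s^2) / (1 + s)) (d := (3*s - 2) / (1 + s))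
    (by linarith) (div_nonneg (by linarith) hs.le) (fun k hk => by rw [hρ k hk]; ring)
    (fun k hk => by rw [hσ k hk]; ring) (by linarith) (by linarith)

/-- Lemma A.4 (Lorenz gauge): the iteration `ρ_k` is monotonically decreasing. -/
theorem stmt12 (s : ℝ) (hs1 : 9/10 < s) (hs2 : s ≤ 1)
    (ρ σ : ℕ → ℝ)
    (hσ1 : σ 1 = (3/2 - s/3 - s^2) / (1 + s))
    (hρ1 : ρ 1 = (7/2 + s - 4*s^2) / 6)
    (hρ : ∀ k, 1 ≤ k → ρ (k+1) = (7/3 - 3*s + 2*s^2/3 + (2*s - 1) * σ k) / 2)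
    (hσ : ∀ k, 1 ≤ k → σ (k+1) = (19/6 - 25*s/6 + s^2 + (3*s - 2) * ρ (k+1)) / (1 + s)) :
    ∀ k, 1 ≤ k → ρ (k+1) ≤ ρ k :=
  stmt12_general s hs1 ρ σ hσ1 hρ1 hρ hσ
end
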